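/- Let m ≥ n ≥ 5 be odd integers, m' = (m-3)/2, n' = (n-3)/2. The Z-linear boundary operator ∂ on the free Z-module generated by the exceptional generators y_1, y_2, y_3, y_4 and the generators x_{k,q} (1 ≤ k ≤ n-2, 1 ≤ q ≤ m-2), defined by: ∂y_1 = y_2, ∂y_2 = 0, ∂y_3 = 0, ∂y_4 = -y_3; ∂x_{1,1} = x_{2,m-2} + x_{1,2} - y_2; ∂x_{1,2l} = x_{2,m-2l-1} (1 ≤ l ≤ m'); ∂x_{1,2l+1} = x_{2,m-2l-2} + x_{1,2l+2} - x_{1,2l} (1 ≤ l ≤ m'-1); ∂x_{1,m-2} = x_{2,1} - x_{1,m-3}; ∂x_{n-2,1} = x_{n-2,2} - x_{n-3,m-2}; ∂x_{n-2,2l} = -x_{n-3,m-2l-1} (1 ≤ l ≤ m'); ∂x_{n-2,2l+1} = -x_{n-3,m-2l-2} - x_{n-2,2l} + x_{n-2,2l+2} (1 ≤ l ≤ m'-1); ∂x_{n-2,m-2} = -x_{n-3,1} - x_{n-2,m-3} + y_3; ∂x_{2k,1} = x_{2k,2}, ∂x_{2k,2l} = 0 (1 ≤ l ≤ m'), ∂x_{2k,2l+1}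 = x_{2k,2l+2} - x_{2k,2l} (1 ≤ l ≤ m'-1), ∂x_{2k,m-2} = -x_{2k,m-3} (1 ≤ k ≤ n'); ∂x_{2k+1,1} = x_{2k+2,m-2} + x_{2k+1,2} - x_{2k,m-2}; ∂x_{2k+1,2l} = x_{2k+2,m-2l-1} - x_{2k,m-2l-1} (1 ≤ l ≤ m'); ∂x_{2k+1,2l+1} = x_{2k+2,m-2l-2} + x_{2k+1,2l+2} - x_{2k,m-2l-2} - x_{2k+1,2l} (1 ≤ l ≤ m'-1); ∂x_{2k+1,m-2} = x_{2k+2,1} - x_{2k+1,m-3} - x_{2k,1} (1 ≤ k ≤ n'-1); satisfies ∂ ∘ ∂ = 0. -/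

import Mathlib

/-- Index type for the generators of the pretzel complex: `Sum.inl j` with
`j = 0,1,2,3` encodes the exceptional generators `y₁, y₂, y₃, y₄`, and
`Sum.inr (k, q)` encodes the generator `x_{k,q}` (meaningful for
`1 ≤ k ≤ n-2`, `1 ≤ q ≤ m-2`). -/
abbrev PIdx : Type := Fin 4 ⊕ ℤ × ℤ

/-- The free `ℤ`-module on the generators. -/
abbrev PMod : Type := PIdx →₀ ℤ

/-- The generator `x_{k,q}`. -/
noncomputable def X (k q : ℤ) : PMod := Finsupp.single (Sum.inr (k, q)) 1

/-- The exceptional generator `y_{j+1}`. -/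
noncomputable def Y (j : Fin 4) : PMod := Finsupp.single (Sum.inl j) 1

/-- A generator index is valid when `1 ≤ k ≤ n-2` and `1 ≤ q ≤ m-2`
(exceptional generators are always valid). -/
def validIdx (m n : ℤ) : PIdx → Prop
  | Sum.inl _ => True
  | Sum.inr (k, q) => 1 ≤ k ∧ k ≤ n - 2 ∧ 1 ≤ q ∧ q ≤ m - 2

/-- The value of the boundary operator `∂` of `CFK^∞(S³, P(-2,m,n))` (with the
filtration indices forgotten) on each generator, following Lemmas 5.5–5.8:
`∂y₁ = y₂`, `∂y₂ = ∂y₃ = 0`, `∂y₄ = -y₃`, and the formulas for `∂x_{k,q}` according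
to whether `k = 1`, `k = n-2`, `k` is even (`k = 2k'`), or `k` is odd
(`k = 2k'+1`, `1 ≤ k' ≤ n'-1`), and whether `q = 1`, `q = m-2`, `q` is even
(`q = 2l`) or odd (`q = 2l+1`). -/
noncomputable def pBdryGen (m n : ℤ) : PIdx → PMod
  | Sum.inl j => if j = 0 then Y 1 else if j = 3 then -Y 2 else 0
  | Sum.inr (k, q) =>
    if k = 1 then
      (if q = 1 then X 2 (m - 2) + X 1 2 - Y 1
       else if q = m - 2 then X 2 1 - X 1 (m - 3)
       else if q % 2 = 0 then X 2 (m - q - 1)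
       else X 2 (m - q - 1) + X 1 (q + 1) - X 1 (q - 1))
    else if k = n - 2 then
      (if q = 1 then X (n - 2) 2 - X (n - 3) (m - 2)
       else if q = m - 2 then -X (n - 3) 1 - X (n - 2) (m - 3) + Y 2
       else if q % 2 = 0 then -X (n - 3) (m - q - 1)
       else -X (n - 3) (m - q - 1) - X (n - 2) (q - 1) + X (n - 2) (q + 1))
    else if k % 2 = 0 then
      (if q = 1 then X k 2
       else if q = m - 2 then -X k (m - 3)
       else if q % 2 = 0 then 0
       else X k (q + 1) - X k (q - 1))
    else
      (if q = 1 then X (k + 1) (m - 2) + X k 2 - X (k - 1) (m - 2)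
       else if q = m - 2 then X (k + 1) 1 - X k (m - 3) - X (k - 1) 1
       else if q % 2 = 0 then X (k + 1) (m - q - 1) - X (k - 1) (m - q - 1)
       else X (k + 1) (m - q - 1) + X k (q + 1) - X (k - 1) (m - q - 1) - X k (q - 1))

/-- The boundary operator `∂`, extended `ℤ`-linearly. -/
noncomputable def pBdry (m n : ℤ) : PMod →ₗ[ℤ] PMod :=
  Finsupp.lsum ℤ fun p => LinearMap.toSpanSingleton ℤ PMod (pBdryGen m n p)

/-!
On the generators `x_{k,q}`, `∂` is the sum of a horizontal part `h`, sending an odd column `q`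
to the columns `q ± 1` of the same row, a vertical part `v`, sending an odd row `k` (counting
`k = 1` and `k = n - 2`) to the rows `k ± 1` with column `q` going to column `m - 1 - q`, and
stray terms in the cycles `y₂`, `y₃`. Both `h` and `v` land where they vanish (even columns,
resp. even rows), so `h² = v² = 0`; and since `m` is odd, the reflection `q ↦ m - 1 - q`
preserves parity and exchanges the neighbours `q ± 1` with `m - 1 - q ∓ 1`, whence
`hv + vh = 0`. Concretely, `∂² x_{k,q}` is evaluated from closed formulas for `∂` on each row
type of `k` (`1`, `n - 2`, even, odd) and column type of `q` (`1`, `m - 2`, even, odd).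
-/

theorem pBdry_single (m n : ℤ) (p : PIdx) :
    pBdry m n (Finsupp.single p 1) = pBdryGen m n p := by
  simp [pBdry]

theorem pBdry_X (m n k q : ℤ) : pBdry m n (X k q) = pBdryGen m n (Sum.inr (k, q)) :=
  pBdry_single m n _

theorem pBdry_Y (m n : ℤ) (j : Fin 4) : pBdry m n (Y j) = pBdryGen m n (Sum.inl j) :=
  pBdry_single m n _

namespace pBdryGen

variable {m n k q : ℤ}

theorem y₂ : pBdryGen m n (Sum.inl 1) = 0 := rfl

theorem y₃ : pBdryGen m n (Sum.inl 2) = 0 := rfl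

theorem first_row_one : pBdryGen m n (Sum.inr (1, 1)) = X 2 (m - 2) + X 1 2 - Y 1 := by
  simp [pBdryGen]

theorem first_row_last (hm : m ≠ 3) :
    pBdryGen m n (Sum.inr (1, m - 2)) = X 2 1 - X 1 (m - 3) := by
  simp only [pBdryGen]; split_ifs <;> first | rfl | omega

theorem first_row_even (hm : m % 2 = 1) (hq : q % 2 = 0) :
    pBdryGen m n (Sum.inr (1, q)) = X 2 (m - q - 1) := by
  simp only [pBdryGen]; split_ifs <;> first | rfl | omega

theorem first_row_odd (hq : q % 2 = 1) (hq₁ : q ≠ 1) (hqm : q ≠ m - 2) :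
    pBdryGen m n (Sum.inr (1, q)) = X 2 (m - q - 1) + X 1 (q + 1) - X 1 (q - 1) := by
  simp only [pBdryGen]; split_ifs <;> first | rfl | omega

theorem last_row_one (hn : n ≠ 3) :
    pBdryGen m n (Sum.inr (n - 2, 1)) = X (n - 2) 2 - X (n - 3) (m - 2) := by
  simp only [pBdryGen]; split_ifs <;> first | rfl | omega

theorem last_row_last (hm : m ≠ 3) (hn : n ≠ 3) :
    pBdryGen m n (Sum.inr (n - 2, m - 2)) = -X (n - 3) 1 - X (n - 2) (m - 3) + Y 2 := by
  simp only [pBdryGen]; split_ifs <;> first | rfl | omega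

theorem last_row_even (hm : m % 2 = 1) (hn : n ≠ 3) (hq : q % 2 = 0) :
    pBdryGen m n (Sum.inr (n - 2, q)) = -X (n - 3) (m - q - 1) := by
  simp only [pBdryGen]; split_ifs <;> first | rfl | omega

theorem last_row_odd (hn : n ≠ 3) (hq : q % 2 = 1) (hq₁ : q ≠ 1) (hqm : q ≠ m - 2) :
    pBdryGen m n (Sum.inr (n - 2, q)) =
      -X (n - 3) (m - q - 1) - X (n - 2) (q - 1) + X (n - 2) (q + 1) := by
  simp only [pBdryGen]; split_ifs <;> first | rfl | omega

theorem even_row_one (hn : n % 2 = 1) (hk : k % 2 = 0) :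
    pBdryGen m n (Sum.inr (k, 1)) = X k 2 := by
  simp only [pBdryGen]; split_ifs <;> first | rfl | omega

theorem even_row_last (hm : m ≠ 3) (hn : n % 2 = 1) (hk : k % 2 = 0) :
    pBdryGen m n (Sum.inr (k, m - 2)) = -X k (m - 3) := by
  simp only [pBdryGen]; split_ifs <;> first | rfl | omega

theorem even_row_even (hm : m % 2 = 1) (hn : n % 2 = 1) (hk : k % 2 = 0) (hq : q % 2 = 0) :
    pBdryGen m n (Sum.inr (k, q)) = 0 := by
  simp only [pBdryGen]; split_ifs <;> first | rfl | omega

theorem even_row_odd (hn : n % 2 = 1) (hk : k % 2 = 0) (hq : q % 2 = 1) (hq₁ : q ≠ 1)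
    (hqm : q ≠ m - 2) :
    pBdryGen m n (Sum.inr (k, q)) = X k (q + 1) - X k (q - 1) := by
  simp only [pBdryGen]; split_ifs <;> first | rfl | omega

theorem odd_row_one (hk : k % 2 = 1) (hk₁ : k ≠ 1) (hkn : k ≠ n - 2) :
    pBdryGen m n (Sum.inr (k, 1)) = X (k + 1) (m - 2) + X k 2 - X (k - 1) (m - 2) := by
  simp only [pBdryGen]; split_ifs <;> first | rfl | omega

theorem odd_row_last (hm : m ≠ 3) (hk : k % 2 = 1) (hk₁ : k ≠ 1) (hkn : k ≠ n - 2) :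
    pBdryGen m n (Sum.inr (k, m - 2)) = X (k + 1) 1 - X k (m - 3) - X (k - 1) 1 := by
  simp only [pBdryGen]; split_ifs <;> first | rfl | omega

theorem odd_row_even (hm : m % 2 = 1) (hk : k % 2 = 1) (hk₁ : k ≠ 1) (hkn : k ≠ n - 2)
    (hq : q % 2 = 0) :
    pBdryGen m n (Sum.inr (k, q)) = X (k + 1) (m - q - 1) - X (k - 1) (m - q - 1) := by
  simp only [pBdryGen]; split_ifs <;> first | rfl | omega

theorem odd_row_odd (hk : k % 2 = 1) (hk₁ : k ≠ 1) (hkn : k ≠ n - 2) (hq : q % 2 = 1)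
    (hq₁ : q ≠ 1) (hqm : q ≠ m - 2) :
    pBdryGen m n (Sum.inr (k, q)) =
      X (k + 1) (m - q - 1) + X k (q + 1) - X (k - 1) (m - q - 1) - X k (q - 1) := by
  simp only [pBdryGen]; split_ifs <;> first | rfl | omega

end pBdryGen

theorem pBdry_pBdryGen_y (m n : ℤ) (j : Fin 4) :
    pBdry m n (pBdryGen m n (Sum.inl j)) = 0 := by
  fin_cases j <;> simp [pBdryGen, pBdry_Y]

theorem pBdry_pBdryGen_x {m n k q : ℤ} (hm : m % 2 = 1) (hm5 : 5 ≤ m) (hn : n % 2 = 1)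
    (hn5 : 5 ≤ n) (hk₁ : 1 ≤ k) (hkn : k ≤ n - 2) (hq₁ : 1 ≤ q) (hqm : q ≤ m - 2) :
    pBdry m n (pBdryGen m n (Sum.inr (k, q))) = 0 := by
  obtain rfl | rfl | hk | ⟨hk, hk_ne_one, hk_ne_last⟩ :
      k = 1 ∨ k = n - 2 ∨ k % 2 = 0 ∨ (k % 2 = 1 ∧ k ≠ 1 ∧ k ≠ n - 2) := by omega
  all_goals
    obtain rfl | rfl | hq | ⟨hq, hq_ne_one, hq_ne_last⟩ :
        q = 1 ∨ q = m - 2 ∨ q % 2 = 0 ∨ (q % 2 = 1 ∧ q ≠ 1 ∧ q ≠ m - 2) := by omega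
  all_goals
    simp (disch := omega) only [map_add, map_sub, map_neg, map_zero, neg_zero, sub_self,
      pBdry_X, pBdry_Y, pBdryGen.y₂, pBdryGen.y₃, pBdryGen.first_row_one, pBdryGen.first_row_last,
      pBdryGen.first_row_even, pBdryGen.first_row_odd, pBdryGen.last_row_one,
      pBdryGen.last_row_last, pBdryGen.last_row_even, pBdryGen.last_row_odd,
      pBdryGen.even_row_one, pBdryGen.even_row_last, pBdryGen.even_row_even,
      pBdryGen.even_row_odd, pBdryGen.odd_row_one, pBdryGen.odd_row_last,
      pBdryGen.odd_row_even, pBdryGen.odd_row_odd]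
    <;> ring_nf <;> abel

/-- For odd integers `m ≥ n ≥ 5`, the boundary operator `∂` of the pretzel complex
satisfies `∂ ∘ ∂ = 0` on the submodule spanned by the (valid) generators. -/
theorem pretzel_bdry_squared_zero (m n : ℤ) (hm : Odd m) (hn : Odd n)
    (hmn : n ≤ m) (hn5 : 5 ≤ n) :
    ∀ p : PIdx, validIdx m n p →
      pBdry m n (pBdry m n (Finsupp.single p 1)) = 0 := by
  rintro (j | ⟨k, q⟩) hp <;> rw [pBdry_single]
  · exact pBdry_pBdryGen_y m n j
  · obtain ⟨hk₁, hkn, hq₁, hqm⟩ := hp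
    exact pBdry_pBdryGen_x (Int.odd_iff.mp hm) (by omega) (Int.odd_iff.mp hn) hn5
      hk₁ hkn hq₁ hqm
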